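/- For every ε > 0 there exist δ > 0 and X₀ such that for all real x ≥ X₀ and all real y with 2 ≤ y ≤ δ·log x, one has |Ψ(x/y, y) − Ψ(x,y)| ≤ ε·Ψ(x,y). (That is, Ψ(x/y, y) ∼ Ψ(x,y) as x → ∞ when y ≥ 2 and y = o(log x).) -/

import Mathlib

open Real Filter
open scoped Classical

/-- The set of `y`-smooth positive integers up to `x` (as a finset):
`n` with `1 ≤ n ≤ x` all of whose prime factors are at most `y`. -/
noncomputable def smoothFinset (x y : ℝ) : Finset ℕ :=
  (Finset.Icc 1 ⌊x⌋₊).filter (fun n => ∀ p : ℕ, p.Prime → p ∣ n → (p : ℝ) ≤ y)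

/-- `Ψ(x,y)`, the number of `y`-smooth integers up to `x`. -/
noncomputable def Psi (x y : ℝ) : ℝ := ((smoothFinset x y).card : ℝ)

/-- `A(x,y)`, the number of distinct products `a*b` with `a, b ∈ S(√x, y)`. -/
noncomputable def prodCount (x y : ℝ) : ℝ :=
  ((((smoothFinset (Real.sqrt x) y) ×ˢ (smoothFinset (Real.sqrt x) y)).image
    (fun p => p.1 * p.2)).card : ℝ)

/-!
An `n ∈ S(x, y)` with `n > x / y` has `log n > log x - log y`. For each prime `p ≤ y` let `e p`
be the least exponent with `p ^ e p > ⌊y⌋`, so that `p ^ e p ≥ y` and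
`∑_{p ≤ y} e p · log p = ψ(y) + θ(y) ≤ 7y`. Cutting the exponent of `p` in `n` into blocks of
length `e p`, all but `7y` of `log n` is carried by complete blocks. Dividing `n` by `j` complete
`p`-blocks lands in `S(x / y, y)`, and distinct pairs `(n, j)` give distinct quotients because
`n · p ^ e p > x`. Counting these pairs gives
`#(S(x, y) \ S(x / y, y)) · (log (x / y) - 7y) ≤ 7y · Ψ(x / y, y)`, which is `o(Ψ(x, y))` once
`y = o(log x)`.
-/

open Finset

section Smooth

variable {x x' y : ℝ} {n : ℕ}

theorem mem_smoothFinset :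
    n ∈ smoothFinset x y ↔ 1 ≤ n ∧ (n : ℝ) ≤ x ∧ ∀ p : ℕ, p.Prime → p ∣ n → (p : ℝ) ≤ y := by
  simp only [smoothFinset, mem_filter, mem_Icc, and_assoc]
  refine and_congr_right fun hn => and_congr_left fun _ => Nat.le_floor_iff' (by omega)

theorem smoothFinset_subset_smoothFinset (h : x ≤ x') : smoothFinset x y ⊆ smoothFinset x' y :=
  fun _ hn => by
    rw [mem_smoothFinset] at hn ⊢
    exact ⟨hn.1, hn.2.1.trans h, hn.2.2⟩

theorem mem_smoothFinset_sdiff :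
    n ∈ smoothFinset x y \ smoothFinset x' y ↔ n ∈ smoothFinset x y ∧ x' < n := by
  rw [Finset.mem_sdiff, mem_smoothFinset, mem_smoothFinset]
  grind

theorem dvd_mem_smoothFinset {m : ℕ} (hn : n ∈ smoothFinset x y) (hm : m ∣ n) (hm0 : 0 < m)
    (hmx : (m : ℝ) ≤ x') : m ∈ smoothFinset x' y := by
  rw [mem_smoothFinset] at hn ⊢
  exact ⟨hm0, hmx, fun p hp hpm => hn.2.2 p hp (hpm.trans hm)⟩

end Smooth

section Injection

variable {x y : ℝ} {Q : ℕ}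

theorem mul_pow_notMem_smoothFinset (hy : 0 < y) (hQ : y ≤ Q) {n k : ℕ}
    (hn : n ∈ smoothFinset x y \ smoothFinset (x / y) y) (hk : k ≠ 0) :
    n * Q ^ k ∉ smoothFinset x y := by
  rw [mem_smoothFinset_sdiff, mem_smoothFinset] at hn
  rw [mem_smoothFinset, not_and_or, not_and_or]
  refine .inr (.inl (not_le.mpr ?_))
  calc x = x / y * y := by field_simp
    _ < n * y := mul_lt_mul_of_pos_right hn.2 hy
    _ ≤ n * Q ^ k := by
      gcongr
      exact hQ.trans (mod_cast Nat.le_self_pow hk Q)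
    _ = ↑(n * Q ^ k) := by push_cast; ring

theorem div_pow_mem_smoothFinset_div (hy : 0 < y) (hQ : y ≤ Q) {n j : ℕ}
    (hn : n ∈ smoothFinset x y) (hj : Q ^ j ∣ n) (hj0 : j ≠ 0) :
    n / Q ^ j ∈ smoothFinset (x / y) y := by
  have hQ0 : 0 < Q := by exact_mod_cast hy.trans_le hQ
  refine dvd_mem_smoothFinset hn (Nat.div_dvd_of_dvd hj)
    (Nat.div_pos (Nat.le_of_dvd (mem_smoothFinset.mp hn).1 hj) (pow_pos hQ0 j)) ?_
  rw [le_div_iff₀ hy]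
  calc ((n / Q ^ j : ℕ) : ℝ) * y ≤ (n / Q ^ j : ℕ) * (Q ^ j : ℕ) := by
        gcongr
        exact hQ.trans (mod_cast Nat.le_self_pow hj0 Q)
    _ = n := by rw [← Nat.cast_mul, Nat.div_mul_cancel hj]
    _ ≤ x := (mem_smoothFinset.mp hn).2.1

theorem eq_of_div_pow_eq_div_pow (hy : 0 < y) (hQ : y ≤ Q) {n n' j j' : ℕ}
    (hn : n ∈ smoothFinset x y \ smoothFinset (x / y) y) (hn' : n' ∈ smoothFinset x y)
    (hj : Q ^ j ∣ n) (hj' : Q ^ j' ∣ n') (hjj' : j ≤ j') (heq : n / Q ^ j = n' / Q ^ j') :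
    n = n' ∧ j = j' := by
  have hn'eq : n' = n * Q ^ (j' - j) := calc
    n' = n' / Q ^ j' * Q ^ j' := (Nat.div_mul_cancel hj').symm
    _ = n / Q ^ j * (Q ^ j * Q ^ (j' - j)) := by rw [← heq, ← pow_add, Nat.add_sub_cancel' hjj']
    _ = n * Q ^ (j' - j) := by rw [← mul_assoc, Nat.div_mul_cancel hj]
  have hjj : j' - j = 0 := by
    by_contra hk
    exact mul_pow_notMem_smoothFinset hy hQ hn hk (hn'eq ▸ hn')
  rw [hjj, pow_zero, mul_one] at hn'eq
  exact ⟨hn'eq.symm, by omega⟩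

theorem sum_le_card_smoothFinset_div (hy : 0 < y) (hQ : y ≤ Q) (t : ℕ → ℕ)
    (ht : ∀ n, Q ^ t n ∣ n) :
    ∑ n ∈ smoothFinset x y \ smoothFinset (x / y) y, t n ≤ #(smoothFinset (x / y) y) := by
  set D := smoothFinset x y \ smoothFinset (x / y) y
  have hdvd : ∀ n j, j ≤ t n → Q ^ j ∣ n := fun n j hj => (Nat.pow_dvd_pow Q hj).trans (ht n)
  calc ∑ n ∈ D, t n = #(D.sigma fun n => Icc 1 (t n)) := by simp [card_sigma]
    _ ≤ _ := by
      refine card_le_card_of_injOn (fun s => s.1 / Q ^ s.2) ?_ ?_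
      · rintro ⟨n, j⟩ hnj
        simp only [coe_sigma, Set.mem_sigma_iff, mem_coe, mem_Icc] at hnj
        exact div_pow_mem_smoothFinset_div hy hQ (mem_sdiff.mp hnj.1).1 (hdvd n j hnj.2.2)
          (Nat.one_le_iff_ne_zero.mp hnj.2.1)
      · rintro ⟨n, j⟩ hnj ⟨n', j'⟩ hnj' heq
        simp only [coe_sigma, Set.mem_sigma_iff, mem_coe, mem_Icc] at hnj hnj' heq
        rcases le_total j j' with hjj' | hjj'
        · obtain ⟨rfl, rfl⟩ := eq_of_div_pow_eq_div_pow hy hQ hnj.1 (mem_sdiff.mp hnj'.1).1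
            (hdvd n j hnj.2.2) (hdvd n' j' hnj'.2.2) hjj' heq
          rfl
        · obtain ⟨rfl, rfl⟩ := eq_of_div_pow_eq_div_pow hy hQ hnj'.1 (mem_sdiff.mp hnj.1).1
            (hdvd n' j' hnj'.2.2) (hdvd n j hnj.2.2) hjj' heq.symm
          rfl

end Injection

theorem Real.log_natCast_le_sum_div_add_one_mul {n : ℕ} {P : Finset ℕ} (hP : n.primeFactors ⊆ P)
    (e : ℕ → ℕ) (he : ∀ p ∈ P, 0 < e p) :
    Real.log n ≤ ∑ p ∈ P, ((n.factorization p / e p + 1 : ℕ) : ℝ) * (e p * Real.log p) := by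
  rw [Real.log_nat_eq_sum_factorization, Finsupp.sum_of_support_subset _ hP _ (by simp)]
  refine sum_le_sum fun p hp => ?_
  rw [← mul_assoc, ← Nat.cast_mul]
  refine mul_le_mul_of_nonneg_right ?_ (Real.log_natCast_nonneg p)
  rw [add_mul, one_mul]
  exact_mod_cast (Nat.lt_div_mul_add (he p hp)).le

section Counting

variable {x y : ℝ}

theorem card_sdiff_smoothFinset_mul_le (hy : 1 < y) {P : Finset ℕ}
    (hP : ∀ p : ℕ, p.Prime → (p : ℝ) ≤ y → p ∈ P) (e : ℕ → ℕ) (he : ∀ p ∈ P, y ≤ (p : ℝ) ^ e p) :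
    #(smoothFinset x y \ smoothFinset (x / y) y) * (Real.log (x / y) - ∑ p ∈ P, e p * Real.log p)
      ≤ (∑ p ∈ P, e p * Real.log p) * #(smoothFinset (x / y) y) := by
  set D := smoothFinset x y \ smoothFinset (x / y) y
  set L := ∑ p ∈ P, e p * Real.log p
  set t : ℕ → ℕ → ℕ := fun n p => n.factorization p / e p
  have he0 : ∀ p ∈ P, 0 < e p := fun p hp => Nat.pos_of_ne_zero fun h0 => by
    have := he p hp
    rw [h0, pow_zero] at this
    linarith
  have hlog : ∀ n ∈ D, Real.log (x / y) - L ≤ ∑ p ∈ P, t n p * (e p * Real.log p) := by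
    intro n hn
    obtain ⟨hnx, hxn⟩ := mem_smoothFinset_sdiff.mp hn
    obtain ⟨hn1, hnx, hsmooth⟩ := mem_smoothFinset.mp hnx
    have hsupp : n.primeFactors ⊆ P := fun p hp =>
      hP p (Nat.prime_of_mem_primeFactors hp) (hsmooth p (Nat.prime_of_mem_primeFactors hp)
        (Nat.dvd_of_mem_primeFactors hp))
    have hxy : 0 < x / y :=
      div_pos (lt_of_lt_of_le (by exact_mod_cast hn1) hnx) (by linarith)
    have hsum := Real.log_natCast_le_sum_div_add_one_mul hsupp e he0
    simp only [Nat.cast_add, Nat.cast_one, add_mul, one_mul, sum_add_distrib] at hsum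
    linarith [Real.log_le_log hxy hxn.le]
  have hcount : ∀ p ∈ P, ∑ n ∈ D, t n p ≤ #(smoothFinset (x / y) y) := fun p hp =>
    sum_le_card_smoothFinset_div (by linarith) (by exact_mod_cast he p hp) (t · p) fun n => by
      rw [← pow_mul]
      exact (Nat.pow_dvd_pow p (Nat.mul_div_le _ _)).trans (Nat.ordProj_dvd n p)
  calc (#D : ℝ) * (Real.log (x / y) - L) = ∑ n ∈ D, (Real.log (x / y) - L) := by
        rw [sum_const, nsmul_eq_mul]
    _ ≤ ∑ n ∈ D, ∑ p ∈ P, t n p * (e p * Real.log p) := sum_le_sum hlog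
    _ = ∑ p ∈ P, (∑ n ∈ D, t n p : ℕ) * (e p * Real.log p) := by
        rw [sum_comm]
        simp only [Nat.cast_sum, sum_mul]
    _ ≤ ∑ p ∈ P, #(smoothFinset (x / y) y) * (e p * Real.log p) := by
        gcongr with p hp
        exact_mod_cast hcount p hp
    _ = L * #(smoothFinset (x / y) y) := by rw [← mul_sum, mul_comm]

end Counting

open Chebyshev in
theorem sum_primesLE_log_add_one_mul_log_le (N : ℕ) :
    ∑ p ∈ N.primesLE, ((Nat.log p N + 1 : ℕ) : ℝ) * Real.log p ≤ 7 * N := by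
  have hlog4 : Real.log 4 < 1.39 := by
    rw [show (4 : ℝ) = 2 ^ 2 by norm_num, Real.log_pow]
    linarith [Real.log_two_lt_d9]
  have hψ := psi_le_const_mul_self (Nat.cast_nonneg N)
  have hθ := theta_le_log4_mul_x (Nat.cast_nonneg N)
  rw [psi_eq_sum_mul_log_prime] at hψ
  rw [theta_eq_sum_primesLE_log] at hθ
  simp only [Nat.cast_add, Nat.cast_one, add_mul, one_mul, sum_add_distrib]
  nlinarith [(Nat.cast_nonneg N : (0 : ℝ) ≤ N)]

theorem card_sdiff_smoothFinset_mul_le_seven_mul {x y : ℝ} (hy : 2 ≤ y) :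
    #(smoothFinset x y \ smoothFinset (x / y) y) * (Real.log (x / y) - 7 * y)
      ≤ 7 * y * #(smoothFinset (x / y) y) := by
  set N := ⌊y⌋₊
  have hL := sum_primesLE_log_add_one_mul_log_le N
  have hNy : (N : ℝ) ≤ y := Nat.floor_le (by linarith)
  have hmain := card_sdiff_smoothFinset_mul_le (x := x) (by linarith) (P := N.primesLE)
    (fun p hp hpy => Nat.mem_primesLE.mpr ⟨Nat.le_floor hpy, hp⟩) (fun p => Nat.log p N + 1)
    fun p hp => (Nat.lt_floor_add_one y).le.trans <| by
      exact_mod_cast Nat.lt_pow_succ_log_self (Nat.one_lt_of_mem_primesLE hp) N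
  calc _ ≤ #(smoothFinset x y \ smoothFinset (x / y) y) * (Real.log (x / y)
        - ∑ p ∈ N.primesLE, ((Nat.log p N + 1 : ℕ) : ℝ) * Real.log p) := by gcongr; linarith
    _ ≤ (∑ p ∈ N.primesLE, ((Nat.log p N + 1 : ℕ) : ℝ) * Real.log p)
        * #(smoothFinset (x / y) y) := hmain
    _ ≤ 7 * y * #(smoothFinset (x / y) y) := by gcongr; linarith

theorem Psi_eq_card_sdiff_add_Psi_div {x y : ℝ} (hx : 0 ≤ x) (hy : 1 ≤ y) :
    Psi x y = #(smoothFinset x y \ smoothFinset (x / y) y) + Psi (x / y) y := by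
  rw [Psi, Psi, ← card_sdiff_add_card_eq_card (smoothFinset_subset_smoothFinset
    (div_le_self hx hy)), Nat.cast_add]

theorem card_sdiff_smoothFinset_mul_log_le {x y : ℝ} (hx : 1 ≤ x) (hy : 2 ≤ y)
    (hyx : 16 * y ≤ Real.log x) :
    #(smoothFinset x y \ smoothFinset (x / y) y) * Real.log x
      ≤ 14 * y * #(smoothFinset (x / y) y) := by
  have hlogy : Real.log y ≤ y := by
    linarith [Real.log_le_sub_one_of_pos (show (0 : ℝ) < y by linarith)]
  have hgap : Real.log x ≤ 2 * (Real.log (x / y) - 7 * y) := by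
    rw [Real.log_div (by linarith) (by linarith)]
    linarith
  calc _ ≤ #(smoothFinset x y \ smoothFinset (x / y) y) * (2 * (Real.log (x / y) - 7 * y)) := by
        gcongr
    _ ≤ 2 * (7 * y * #(smoothFinset (x / y) y)) := by
        linarith [card_sdiff_smoothFinset_mul_le_seven_mul (x := x) hy]
    _ = _ := by ring

/-- Lemma (smally): `Ψ(x/y, y) ∼ Ψ(x,y)` when `y ≥ 2` and `y = o(log x)`. -/
theorem stmt_4 :
    ∀ ε : ℝ, 0 < ε → ∃ δ : ℝ, 0 < δ ∧ ∃ X₀ : ℝ,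
      ∀ x y : ℝ, X₀ ≤ x → 2 ≤ y → y ≤ δ * Real.log x →
        |Psi (x / y) y - Psi x y| ≤ ε * Psi x y := by
  intro ε hε
  refine ⟨min (1 / 16) (ε / 14), by positivity, 1, fun x y hx hy hyx => ?_⟩
  have hlogx : 0 ≤ Real.log x := Real.log_nonneg hx
  have h16 : 16 * y ≤ Real.log x := by nlinarith [min_le_left (1 / 16) (ε / 14)]
  have h14 : 14 * y ≤ ε * Real.log x := by nlinarith [min_le_right (1 / 16) (ε / 14)]
  have hPsi := Psi_eq_card_sdiff_add_Psi_div (x := x) (y := y) (by linarith) (by linarith)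
  set a : ℝ := ↑(#(smoothFinset x y \ smoothFinset (x / y) y))
  have ha : a * Real.log x ≤ ε * Psi (x / y) y * Real.log x := by
    have := card_sdiff_smoothFinset_mul_log_le hx hy h16
    have := mul_le_mul_of_nonneg_right h14 (Nat.cast_nonneg (#(smoothFinset (x / y) y)))
    rw [Psi]
    linarith
  have ha' : a ≤ ε * Psi (x / y) y := le_of_mul_le_mul_right ha (by linarith)
  have ha0 : 0 ≤ a := Nat.cast_nonneg _
  rw [hPsi, abs_sub_comm, add_sub_cancel_right, abs_of_nonneg ha0]
  nlinarith [mul_nonneg hε.le ha0]
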